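/- arXiv:1703.01735 — 4 statements merged into one kernel-verified Lean document; each statement's English description precedes it below -/
import Mathlib

section
/- Let ξ > 0 be an irrational real number and for n = (n₁, n₂) ∈ (ℕ⁺)² define μ_n(ξ) := n₁² + ξ·n₂². Then the infimum of |μ_n(ξ) − μ_m(ξ)| over all pairs n, m ∈ (ℕ⁺)² with μ_n(ξ) ≠ μ_m(ξ) is equal to 0. -/
theorem stmt_1 (ξ : ℝ) (hξ : 0 < ξ) (hirr : Irrational ξ)
    (μ : ℕ+ × ℕ+ → ℝ)
    (hμ : ∀ n : ℕ+ × ℕ+, μ n = (n.1 : ℝ) ^ 2 + ξ * (n.2 : ℝ) ^ 2) :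
    sInf {d : ℝ | ∃ n m : ℕ+ × ℕ+, μ n ≠ μ m ∧ d = |μ n - μ m|} = 0 := by
  set S : Set ℝ := {d : ℝ | ∃ n m : ℕ+ × ℕ+, μ n ≠ μ m ∧ d = |μ n - μ m|} with hS
  -- key: for every ε > 0 there is an element of S below ε
  have key : ∀ ε : ℝ, 0 < ε → ∃ d ∈ S, d < ε := by
    intro ε hε
    set δ : ℝ := min (ε / 8) ξ with hδdef
    have hδ : 0 < δ := lt_min (by linarith) hξ
    obtain ⟨n, hn⟩ := exists_nat_one_div_lt hδ
    have npos : 0 < n + 1 := Nat.succ_pos n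
    obtain ⟨j, k, hk0, hkn, habs⟩ := Real.exists_int_int_abs_mul_sub_le ξ npos
    have hlt : |(k : ℝ) * ξ - j| < δ := by
      refine lt_of_le_of_lt habs ?_
      calc (1 : ℝ) / (↑(n + 1) + 1) ≤ 1 / (n + 1) := by
            apply one_div_le_one_div_of_le
            · positivity
            · push_cast; linarith
        _ < δ := hn
    have hk1 : (1 : ℝ) ≤ (k : ℝ) := by exact_mod_cast hk0
    have hj0 : 0 < j := by
      have h1 : (k : ℝ) * ξ - δ < (j : ℝ) := by
        cases abs_lt.mp hlt with
        | intro h1 h2 => linarith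
      have h2 : δ ≤ ξ := min_le_right _ _
      have h3 : ξ ≤ (k : ℝ) * ξ := le_mul_of_one_le_left hξ.le hk1
      have : (0 : ℝ) < (j : ℝ) := by linarith
      exact_mod_cast this
    -- pass to naturals
    set P : ℕ := j.toNat with hPdef
    set Q : ℕ := k.toNat with hQdef
    have hPj : (P : ℤ) = j := Int.toNat_of_nonneg hj0.le
    have hQk : (Q : ℤ) = k := Int.toNat_of_nonneg hk0.le
    have hP1 : 1 ≤ P := by omega
    have hQ1 : 1 ≤ Q := by omega
    have hPr : (P : ℝ) = (j : ℝ) := by exact_mod_cast congrArg (Int.cast : ℤ → ℝ) hPj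
    have hQr : (Q : ℝ) = (k : ℝ) := by exact_mod_cast congrArg (Int.cast : ℤ → ℝ) hQk
    have h2P : 0 < 2*P-1 := by omega
    have h2Q : 0 < 2*Q-1 := by omega
    set a : ℕ+ := ⟨2*P+1, by omega⟩ with ha
    set b : ℕ+ := ⟨2*Q-1, h2Q⟩ with hb
    set c : ℕ+ := ⟨2*P-1, h2P⟩ with hc
    set e : ℕ+ := ⟨2*Q+1, by omega⟩ with he
    have hdiff : μ (a, b) - μ (c, e) = 8 * (j : ℝ) - 8 * ((k : ℝ) * ξ) := by
      rw [hμ, hμ]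
      have e1 : ((2*P-1 : ℕ) : ℝ) = 2 * (P : ℝ) - 1 := by
        have : ((2*P-1 : ℕ) : ℝ) = ((2*P : ℕ) : ℝ) - ((1:ℕ) : ℝ) :=
          Nat.cast_sub (by omega)
        push_cast at this ⊢; linarith
      have e2 : ((2*Q-1 : ℕ) : ℝ) = 2 * (Q : ℝ) - 1 := by
        have : ((2*Q-1 : ℕ) : ℝ) = ((2*Q : ℕ) : ℝ) - ((1:ℕ) : ℝ) :=
          Nat.cast_sub (by omega)
        push_cast at this ⊢; linarith
      simp only [ha, hb, hc, he, PNat.mk_coe]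
      push_cast [e1, e2, hPr, hQr]
      ring
    have hne0 : μ (a, b) ≠ μ (c, e) := by
      intro hEq
      have h0 : 8 * (j : ℝ) - 8 * ((k : ℝ) * ξ) = 0 := by
        rw [← hdiff, sub_eq_zero]; exact hEq
      have hkR : (k : ℝ) ≠ 0 := by positivity
      apply hirr
      refine ⟨(j : ℚ) / (k : ℚ), ?_⟩
      push_cast
      field_simp
      linarith
    refine ⟨|μ (a, b) - μ (c, e)|, ⟨(a, b), (c, e), hne0, rfl⟩, ?_⟩
    rw [hdiff]
    have habs8 : |8 * (j : ℝ) - 8 * ((k : ℝ) * ξ)| = 8 * |(k : ℝ) * ξ - j| := by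
      rw [← abs_neg, show -(8 * (j:ℝ) - 8 * ((k:ℝ)*ξ)) = 8 * ((k:ℝ)*ξ - j) by ring,
        abs_mul, abs_of_nonneg (by norm_num : (0:ℝ) ≤ 8)]
    rw [habs8]
    have h8 : δ ≤ ε / 8 := min_le_left _ _
    nlinarith [hlt]
  have hne : S.Nonempty := by
    obtain ⟨d, hd, _⟩ := key 1 one_pos
    exact ⟨d, hd⟩
  have hbdd : BddBelow S := by
    refine ⟨0, fun d hd => ?_⟩
    obtain ⟨a, b, _, rfl⟩ := hd
    exact abs_nonneg _
  apply le_antisymm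
  · by_contra h
    push_neg at h
    obtain ⟨d, hd, hdlt⟩ := key (sInf S) h
    exact absurd (csInf_le hbdd hd) (not_le.mpr hdlt)
  · apply le_csInf hne
    intro d hd
    obtain ⟨a, b, _, rfl⟩ := hd
    exact abs_nonneg _
end

section
/- Let N ≥ 3 and ξ₂, …, ξ_N > 0 with at least one ξ_j irrational. For n ∈ (ℕ⁺)^N set μ_n := n₁² + Σ_{j=2}^N ξ_j n_j². Then inf{ |μ_n − μ_m| : n, m ∈ (ℕ⁺)^N, μ_n ≠ μ_m } = 0. -/
/-!
By Dirichlet's approximation theorem an irrational `ξ > 0` admits positive integers `s, t`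
with `0 < |t - s ξ| < ε`. Changing only the coordinates `n₁ = 2t ± 1` and `n_j = 2s ∓ 1`
moves `μ` by `(2t + 1)² - (2t - 1)² - ξ ((2s + 1)² - (2s - 1)²) = 8 (t - s ξ)`,
a nonzero gap smaller than `8 ε`.
-/

open Finset

lemma Irrational.exists_pos_nat_abs_sub_mul_lt {ξ : ℝ} (hirr : Irrational ξ) (hξ : 0 < ξ)
    {ε : ℝ} (hε : 0 < ε) : ∃ s t : ℕ, 0 < s ∧ 0 < t ∧ (t : ℝ) ≠ s * ξ ∧ |(t : ℝ) - s * ξ| < ε := by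
  obtain ⟨n, hn⟩ := exists_nat_one_div_lt (lt_min hε hξ)
  obtain ⟨j, k, hk, -, hjk⟩ := Real.exists_int_int_abs_mul_sub_le ξ n.succ_pos
  have hclose : |(k : ℝ) * ξ - j| < min ε ξ := by
    refine hjk.trans_lt (lt_of_le_of_lt ?_ hn)
    gcongr
    simp
  lift k to ℕ using hk.le
  rw [Int.cast_natCast] at hclose
  have hj : 0 < j := by
    have hk1 : (1 : ℝ) ≤ k := by exact_mod_cast hk
    have hlt := (abs_lt.mp hclose).2
    have : (0 : ℝ) < j := by nlinarith [min_le_right ε ξ]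
    exact_mod_cast this
  lift j to ℕ using hj.le
  refine ⟨k, j, by exact_mod_cast hk, by exact_mod_cast hj, fun h => ?_, ?_⟩
  · exact (hirr.natCast_mul (by exact_mod_cast hk.ne')).ne_nat j h.symm
  · rw [abs_sub_comm]
    exact_mod_cast hclose.trans_le (min_le_left _ _)

section

variable {ι : Type*} [Fintype ι] [DecidableEq ι]

def weightedSqSum (i₀ : ι) (ξ : ι → ℝ) (n : ι → ℕ+) : ℝ :=
  (n i₀ : ℝ) ^ 2 + ∑ i ∈ univ.erase i₀, ξ i * (n i : ℝ) ^ 2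

def twoPointVec (i₀ j : ι) (a b : ℕ+) : ι → ℕ+ :=
  Function.update (Function.update 1 i₀ a) j b

lemma weightedSqSum_twoPointVec_sub {i₀ j : ι} (hj : j ≠ i₀) (ξ : ι → ℝ) (a b a' b' : ℕ+) :
    weightedSqSum i₀ ξ (twoPointVec i₀ j a b) - weightedSqSum i₀ ξ (twoPointVec i₀ j a' b') =
      ((a : ℝ) ^ 2 - (a' : ℝ) ^ 2) + ξ j * ((b : ℝ) ^ 2 - (b' : ℝ) ^ 2) := by
  have hsum : ∑ i ∈ univ.erase i₀, ξ i * ((twoPointVec i₀ j a b i : ℝ) ^ 2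
      - (twoPointVec i₀ j a' b' i : ℝ) ^ 2) = ξ j * ((b : ℝ) ^ 2 - (b' : ℝ) ^ 2) := by
    rw [sum_eq_single_of_mem j (mem_erase.mpr ⟨hj, mem_univ j⟩)]
    · simp [twoPointVec]
    · intro i hi hij
      simp [twoPointVec, hij, ne_of_mem_erase hi]
  have hfst : ∀ a b : ℕ+, twoPointVec i₀ j a b i₀ = a := fun a b => by
    rw [twoPointVec, Function.update_of_ne hj.symm, Function.update_self]
  rw [weightedSqSum, weightedSqSum, ← hsum, hfst, hfst]
  simp only [mul_sub, sum_sub_distrib]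
  ring

lemma weightedSqSum_twoPointVec_odd_sub {i₀ j : ι} (hj : j ≠ i₀) (ξ : ι → ℝ) {s t : ℕ}
    (hs : 0 < s) (ht : 0 < t) :
    weightedSqSum i₀ ξ
        (twoPointVec i₀ j ((2 * t + 1).toPNat (by omega)) ((2 * s - 1).toPNat (by omega))) -
      weightedSqSum i₀ ξ
        (twoPointVec i₀ j ((2 * t - 1).toPNat (by omega)) ((2 * s + 1).toPNat (by omega))) =
      8 * ((t : ℝ) - s * ξ j) := by
  have hcoe : ∀ (k : ℕ) (hk : 0 < k), ((k.toPNat hk : ℕ) : ℝ) = k := fun _ _ => rfl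
  rw [weightedSqSum_twoPointVec_sub hj]
  simp only [hcoe]
  rw [Nat.cast_sub (by omega), Nat.cast_sub (by omega)]
  push_cast
  ring

lemma exists_weightedSqSum_ne_abs_sub_lt {i₀ j : ι} (hj : j ≠ i₀) {ξ : ι → ℝ} (hξ : 0 < ξ j)
    (hirr : Irrational (ξ j)) {ε : ℝ} (hε : 0 < ε) :
    ∃ n m : ι → ℕ+, weightedSqSum i₀ ξ n ≠ weightedSqSum i₀ ξ m ∧
      |weightedSqSum i₀ ξ n - weightedSqSum i₀ ξ m| < ε := by
  obtain ⟨s, t, hs, ht, hne, hlt⟩ :=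
    hirr.exists_pos_nat_abs_sub_mul_lt hξ (show 0 < ε / 8 by positivity)
  have hgap := weightedSqSum_twoPointVec_odd_sub hj ξ hs ht
  have hgap_ne : 8 * ((t : ℝ) - s * ξ j) ≠ 0 := mul_ne_zero (by norm_num) (sub_ne_zero.mpr hne)
  have hgap_lt : |8 * ((t : ℝ) - s * ξ j)| < ε := by
    rw [abs_mul, abs_of_pos (by norm_num : (0 : ℝ) < 8)]
    linarith
  exact ⟨_, _, sub_ne_zero.mp (hgap.trans_ne hgap_ne), (congrArg abs hgap).trans_lt hgap_lt⟩

end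

theorem stmt_4 (N : ℕ) (hN : 3 ≤ N) (ξ : Fin N → ℝ)
    (hpos : ∀ j : Fin N, j ≠ ⟨0, by omega⟩ → 0 < ξ j)
    (hirr : ∃ j : Fin N, j ≠ ⟨0, by omega⟩ ∧ Irrational (ξ j))
    (μ : (Fin N → ℕ+) → ℝ)
    (hμ : ∀ n, μ n = (n ⟨0, by omega⟩ : ℝ) ^ 2 +
      ∑ j ∈ Finset.univ.erase (⟨0, by omega⟩ : Fin N), ξ j * (n j : ℝ) ^ 2) :
    sInf {d : ℝ | ∃ n m : Fin N → ℕ+, μ n ≠ μ m ∧ d = |μ n - μ m|} = 0 := by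
  obtain ⟨j, hj, hjirr⟩ := hirr
  obtain rfl : μ = weightedSqSum _ ξ := funext hμ
  have hsmall := fun ε (hε : (0 : ℝ) < ε) =>
    exists_weightedSqSum_ne_abs_sub_lt hj (hpos j hj) hjirr hε
  obtain ⟨n, m, hnm, -⟩ := hsmall 1 one_pos
  refine csInf_eq_of_forall_ge_of_forall_gt_exists_lt ⟨_, n, m, hnm, rfl⟩ ?_ fun ε hε => ?_
  · rintro d ⟨n, m, -, rfl⟩
    exact abs_nonneg _
  · obtain ⟨n, m, hnm, hlt⟩ := hsmall ε hε
    exact ⟨_, ⟨n, m, hnm, rfl⟩, hlt⟩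
end

section
/- Let L₁, L₂, …, L_N > 0 and consider the set Λ := { Σ_{j=1}^N n_j² π² / L_j² : n ∈ (ℕ⁺)^N } of Dirichlet eigenvalues of the Laplacian on the box (0,L₁)×…×(0,L_N), enumerated as a strictly increasing sequence (λ_k)_{k≥1}. Then λ_{k+1}/λ_k → 1 as k → ∞. -/
open Real in
theorem stmt_5 (N : ℕ) (hN : 1 ≤ N) (L : Fin N → ℝ) (hL : ∀ j, 0 < L j)
    (lam : ℕ → ℝ) (hmono : StrictMono lam)
    (hrange : Set.range lam =
      {x : ℝ | ∃ n : Fin N → ℕ+, x = ∑ j, (n j : ℝ) ^ 2 * π ^ 2 / (L j) ^ 2}) :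
    Filter.Tendsto (fun k => lam (k + 1) / lam k) Filter.atTop (nhds 1) := by
  have hπ : (0:ℝ) < π := Real.pi_pos
  set j0 : Fin N := ⟨0, hN⟩ with hj0
  set A : ℝ := π ^ 2 / (L j0) ^ 2 with hA
  have hLj0 := hL j0
  have hApos : 0 < A := by positivity
  -- every point of Λ is positive
  have hval_pos : ∀ n : Fin N → ℕ+, 0 < ∑ j, (n j : ℝ) ^ 2 * π ^ 2 / (L j) ^ 2 := by
    intro n
    apply Finset.sum_pos
    · intro j _
      have := hL j
      positivity
    · exact ⟨j0, Finset.mem_univ _⟩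
  have hmem : ∀ k, ∃ n : Fin N → ℕ+, lam k = ∑ j, (n j : ℝ) ^ 2 * π ^ 2 / (L j) ^ 2 := by
    intro k
    have : lam k ∈ Set.range lam := ⟨k, rfl⟩
    rw [hrange] at this
    exact this
  have hlampos : ∀ k, 0 < lam k := by
    intro k
    obtain ⟨n, hn⟩ := hmem k
    rw [hn]; exact hval_pos n
  -- step bound
  have hstep : ∀ k, lam (k + 1) ≤ lam k + 2 * Real.sqrt A * Real.sqrt (lam k) + A := by
    intro k
    obtain ⟨n, hn⟩ := hmem k
    set m : ℕ+ := n j0 with hm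
    have key : ∀ v : ℕ+, ∑ j, ((Function.update n j0 v) j : ℝ) ^ 2 * π ^ 2 / (L j) ^ 2
        = (∑ j ∈ Finset.univ.erase j0, (n j : ℝ) ^ 2 * π ^ 2 / (L j) ^ 2) + (v : ℝ) ^ 2 * A := by
      intro v
      rw [← Finset.sum_erase_add _ _ (Finset.mem_univ j0)]
      congr 1
      · apply Finset.sum_congr rfl
        intro j hj
        rw [Function.update_of_ne (Finset.ne_of_mem_erase hj)]
      · rw [Function.update_self, hA, mul_div_assoc]
    have hlamk : lam k = (∑ j ∈ Finset.univ.erase j0, (n j : ℝ) ^ 2 * π ^ 2 / (L j) ^ 2)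
        + (m : ℝ) ^ 2 * A := by
      have := key m
      rwa [hm, Function.update_eq_self, ← hn] at this
    have herase_nonneg : 0 ≤ ∑ j ∈ Finset.univ.erase j0, (n j : ℝ) ^ 2 * π ^ 2 / (L j) ^ 2 := by
      apply Finset.sum_nonneg
      intro j _
      have := hL j
      positivity
    have hm2A : (m : ℝ) ^ 2 * A ≤ lam k := by
      rw [hlamk]; linarith
    have hmsqrt : (m : ℝ) * Real.sqrt A ≤ Real.sqrt (lam k) := by
      have hnn : (0:ℝ) ≤ (m : ℝ) * Real.sqrt A := by positivity
      refine (Real.le_sqrt hnn (hlampos k).le).mpr ?_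
      calc ((m : ℝ) * Real.sqrt A) ^ 2 = (m : ℝ) ^ 2 * A := by
            rw [mul_pow, Real.sq_sqrt hApos.le]
        _ ≤ lam k := hm2A
    -- membership of the bumped eigenvalue
    have hymem : (lam k + (2 * (m : ℝ) + 1) * A) ∈ Set.range lam := by
      rw [hrange]
      refine ⟨Function.update n j0 (m + 1), ?_⟩
      rw [key (m + 1), hlamk]
      push_cast
      ring
    obtain ⟨i, hi⟩ := hymem
    have hik : k < i := by
      have : lam k < lam i := by
        rw [hi]; nlinarith [hm2A, hlampos k]
      exact hmono.lt_iff_lt.mp this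
    have : lam (k + 1) ≤ lam i := hmono.monotone hik
    rw [hi] at this
    have hmA : (m : ℝ) * A ≤ Real.sqrt (lam k) * Real.sqrt A := by
      calc (m : ℝ) * A = ((m : ℝ) * Real.sqrt A) * Real.sqrt A := by
            rw [mul_assoc, Real.mul_self_sqrt hApos.le]
        _ ≤ Real.sqrt (lam k) * Real.sqrt A := by
            apply mul_le_mul_of_nonneg_right hmsqrt (Real.sqrt_nonneg A)
    nlinarith [this]
  -- lam tends to infinity
  have htop : Filter.Tendsto lam Filter.atTop Filter.atTop := by
    apply hmono.monotone.tendsto_atTop_atTop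
    intro M
    by_contra h
    push_neg at h
    have hM0 : 0 < M := lt_trans (hlampos 0) (h 0)
    set b : Fin N → ℕ := fun j => ⌈M * (L j) ^ 2 / π ^ 2⌉₊ with hb
    set S : Set (Fin N → ℕ+) := Set.pi Set.univ (fun j => {p : ℕ+ | (p : ℕ) ≤ b j}) with hS
    have hSfin : S.Finite := by
      apply Set.Finite.pi
      intro j
      apply Set.Finite.subset (Set.finite_Iic (⟨b j + 1, Nat.succ_pos _⟩ : ℕ+))
      intro p hp
      exact Set.mem_Iic.mpr ((PNat.coe_le_coe _ _).mp (hp.trans (Nat.le_succ _)))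
    have hsub : Set.range lam ⊆ (fun n : Fin N → ℕ+ => ∑ j, (n j : ℝ) ^ 2 * π ^ 2 / (L j) ^ 2) '' S := by
      rintro x ⟨k, rfl⟩
      obtain ⟨n, hn⟩ := hmem k
      refine ⟨n, ?_, hn.symm⟩
      intro j _
      simp only [Set.mem_setOf_eq]
      have hterm : (n j : ℝ) ^ 2 * π ^ 2 / (L j) ^ 2 ≤ lam k := by
        rw [hn]
        apply Finset.single_le_sum (f := fun j => (n j : ℝ) ^ 2 * π ^ 2 / (L j) ^ 2)
          (fun i _ => by have := hL i; positivity) (Finset.mem_univ j)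
      have hLj := hL j
      have h1 : (1:ℝ) ≤ (n j : ℝ) := by exact_mod_cast (n j).one_le
      have hsq : (n j : ℝ) ^ 2 ≤ M * (L j) ^ 2 / π ^ 2 := by
        rw [le_div_iff₀ (by positivity : (0:ℝ) < π ^ 2)]
        have h' := (div_le_iff₀ (by positivity : (0:ℝ) < (L j) ^ 2)).mp hterm
        nlinarith [h k, sq_nonneg (L j)]
      have hle : (n j : ℝ) ≤ M * (L j) ^ 2 / π ^ 2 := by nlinarith
      have : (n j : ℝ) ≤ (b j : ℝ) := le_trans hle (Nat.le_ceil _)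
      exact_mod_cast this
    exact Set.infinite_range_of_injective hmono.injective
      (Set.Finite.subset (hSfin.image _) hsub)
  -- squeeze
  have sqrtTop : Filter.Tendsto Real.sqrt Filter.atTop Filter.atTop := by
    apply Monotone.tendsto_atTop_atTop (fun _ _ h => Real.sqrt_le_sqrt h)
    intro b
    exact ⟨(max b 0) ^ 2, by rw [Real.sqrt_sq (le_max_right b 0)]; exact le_max_left _ _⟩
  have hsqrt_top : Filter.Tendsto (fun k => Real.sqrt (lam k)) Filter.atTop Filter.atTop :=
    sqrtTop.comp htop
  have hup : Filter.Tendsto (fun k => 1 + (2 * Real.sqrt A / Real.sqrt (lam k) + A / lam k))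
      Filter.atTop (nhds 1) := by
    have h1 : Filter.Tendsto (fun k => 2 * Real.sqrt A / Real.sqrt (lam k)) Filter.atTop (nhds 0) :=
      Filter.Tendsto.div_atTop tendsto_const_nhds hsqrt_top
    have h2 : Filter.Tendsto (fun k => A / lam k) Filter.atTop (nhds 0) :=
      Filter.Tendsto.div_atTop tendsto_const_nhds htop
    have := tendsto_const_nhds (x := (1:ℝ)) (f := Filter.atTop (α := ℕ)) |>.add (h1.add h2)
    simpa using this
  apply tendsto_of_tendsto_of_tendsto_of_le_of_le tendsto_const_nhds hup
  · intro k
    rw [le_div_iff₀ (hlampos k), one_mul]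
    exact (hmono (Nat.lt_succ_self k)).le
  · intro k
    rw [div_le_iff₀ (hlampos k)]
    have hs := hstep k
    have hsq : Real.sqrt (lam k) * Real.sqrt (lam k) = lam k := Real.mul_self_sqrt (hlampos k).le
    have hspos : 0 < Real.sqrt (lam k) := Real.sqrt_pos.mpr (hlampos k)
    have e1 : 2 * Real.sqrt A / Real.sqrt (lam k) * lam k = 2 * Real.sqrt A * Real.sqrt (lam k) := by
      rw [div_mul_eq_mul_div, mul_div_assoc, Real.div_sqrt]
    have e2 : A / lam k * lam k = A := div_mul_cancel₀ _ (hlampos k).ne'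
    have e3 : (1 + (2 * Real.sqrt A / Real.sqrt (lam k) + A / lam k)) * lam k
        = lam k + 2 * Real.sqrt A / Real.sqrt (lam k) * lam k + A / lam k * lam k := by ring
    rw [e3, e1, e2]
    exact hs
end

section
/- Let Ω₂ := (ℓ, ℓ+δ) × (0,π) with 0 ≤ ℓ < ℓ+δ ≤ π, and φ_n(x) = (2/π) sin(n₁x₁) sin(n₂x₂) for n ∈ (ℕ⁺)². Then there exists c* > 0 such that for all n, ∫_{Ω₂} |∇φ_n(x)|² dx ≥ c*·δ·(n₁² + n₂²). -/
/-!
Integrating out `x₂` leaves `(2/π) (n₁² cos² (n₁ x₁) + n₂² sin² (n₁ x₁))`, so it suffices to bound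
`∫ cos² (k x)` and `∫ sin² (k x)` over an interval of length `δ` from below, uniformly in `k ≥ 1`.
Both equal `δ/2 ± (1/2) ∫ cos (2 k x)`, and that last integral is at most `|sin (k δ)| / k` in
absolute value. Since `|sin (k δ)| ≤ min 1 (|sin δ| + (k - 1) δ)` and `|sin δ| < δ`, the difference
`δ - |sin (k δ)| / k` stays above `min (δ/2) (δ (δ - |sin δ|)/2)` for all `k ≥ 1`.
-/

open Real intervalIntegral

theorem integral_cos_mul {k : ℝ} (hk : k ≠ 0) (a b : ℝ) :
    ∫ x in a..b, cos (k * x) = (sin (k * b) - sin (k * a)) / k := by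
  rw [integral_comp_mul_left (fun x => cos x) hk, integral_cos, smul_eq_mul, inv_mul_eq_div]

theorem abs_integral_cos_two_mul_le {k : ℝ} (hk : 0 < k) (a b : ℝ) :
    |∫ x in a..b, cos (2 * k * x)| ≤ |sin (k * (b - a))| / k := by
  rw [integral_cos_mul (by positivity), sin_sub_sin, abs_div,
    abs_of_pos (by positivity : 0 < 2 * k), abs_mul, abs_mul, div_le_div_iff₀ (by positivity) hk]
  have := abs_cos_le_one ((2 * k * b + 2 * k * a) / 2)
  have hhalf : (2 * k * b - 2 * k * a) / 2 = k * (b - a) := by ring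
  rw [hhalf, abs_two]
  nlinarith [mul_le_mul_of_nonneg_left this (by positivity : 0 ≤ 2 * |sin (k * (b - a))| * k)]

theorem integral_cos_mul_sq (k a b : ℝ) :
    ∫ x in a..b, cos (k * x) ^ 2 = (b - a) / 2 + (∫ x in a..b, cos (2 * k * x)) / 2 := by
  have hcont : Continuous fun x => cos (2 * k * x) := by fun_prop
  simp_rw [cos_sq, ← mul_assoc]
  rw [integral_add intervalIntegrable_const ((hcont.intervalIntegrable a b).div_const 2),
    integral_div]
  simp

theorem integral_sin_mul_sq (k a b : ℝ) :
    ∫ x in a..b, sin (k * x) ^ 2 = (b - a) / 2 - (∫ x in a..b, cos (2 * k * x)) / 2 := by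
  have hcont : Continuous fun x => cos (2 * k * x) := by fun_prop
  simp_rw [sin_sq_eq_half_sub, ← mul_assoc]
  rw [integral_sub intervalIntegrable_const ((hcont.intervalIntegrable a b).div_const 2),
    integral_div]
  simp

theorem exists_pos_le_sub_abs_sin_mul_div_div_two {δ : ℝ} (hδ : 0 < δ) :
    ∃ K > 0, ∀ k ≥ 1, K ≤ (δ - |sin (k * δ)| / k) / 2 := by
  have hsin : |sin δ| < δ := by simpa [abs_of_pos hδ] using abs_sin_lt_abs hδ.ne'
  refine ⟨min (δ / 4) (δ * (δ - |sin δ|) / 4), lt_min (by positivity) (by nlinarith),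
    fun k hk => ?_⟩
  have hk0 : 0 < k := by linarith
  rw [le_div_iff₀ two_pos, le_sub_comm, div_le_iff₀ hk0]
  rcases le_or_gt 2 (k * δ) with hlarge | hsmall
  · have := abs_sin_le_one (k * δ)
    nlinarith [min_le_left (δ / 4) (δ * (δ - |sin δ|) / 4)]
  · have hlip : |sin (k * δ)| ≤ |sin δ| + (k - 1) * δ := by
      have := abs_sin_sub_sin_le (k * δ) δ
      rw [abs_of_nonneg (by nlinarith : 0 ≤ k * δ - δ)] at this
      linarith [abs_sub_abs_le_abs_sub (sin (k * δ)) (sin δ)]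
    nlinarith [min_le_right (δ / 4) (δ * (δ - |sin δ|) / 4)]

theorem exists_pos_le_integral_cos_mul_sq_and_sin_mul_sq {δ : ℝ} (hδ : 0 < δ) :
    ∃ K > 0, ∀ a k : ℝ, 1 ≤ k →
      K ≤ ∫ x in a..a + δ, cos (k * x) ^ 2 ∧ K ≤ ∫ x in a..a + δ, sin (k * x) ^ 2 := by
  obtain ⟨K, hK, hKle⟩ := exists_pos_le_sub_abs_sin_mul_div_div_two hδ
  refine ⟨K, hK, fun a k hk => ?_⟩
  have hk0 : 0 < k := by linarith
  have hint := abs_le.mp (abs_integral_cos_two_mul_le hk0 a (a + δ))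
  rw [add_sub_cancel_left] at hint
  rw [integral_cos_mul_sq, integral_sin_mul_sq, add_sub_cancel_left]
  have := hKle k hk
  constructor <;> linarith

theorem integral_cos_two_mul_nat_mul_zero_pi {n : ℕ} (hn : n ≠ 0) :
    ∫ x in (0)..π, cos (2 * n * x) = 0 := by
  have h2nπ : sin (2 * n * π) = 0 := by exact_mod_cast sin_nat_mul_pi (2 * n)
  rw [integral_cos_mul (by positivity), h2nπ, mul_zero, sin_zero, sub_zero, zero_div]

theorem integral_zero_pi_gradient_sq_sin_mul_sin (p : ℝ) {n : ℕ} (hn : n ≠ 0) (x₁ : ℝ) :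
    ∫ x₂ in (0)..π,
        ((2 / π) * p * cos (p * x₁) * sin (n * x₂)) ^ 2 +
          ((2 / π) * n * sin (p * x₁) * cos (n * x₂)) ^ 2 =
      (2 / π) * (p ^ 2 * cos (p * x₁) ^ 2 + n ^ 2 * sin (p * x₁) ^ 2) := by
  have hsplit : ∀ x₂ : ℝ,
      ((2 / π) * p * cos (p * x₁) * sin (n * x₂)) ^ 2 +
          ((2 / π) * n * sin (p * x₁) * cos (n * x₂)) ^ 2 =
        ((2 / π) * p * cos (p * x₁)) ^ 2 * sin (n * x₂) ^ 2 +
          ((2 / π) * n * sin (p * x₁)) ^ 2 * cos (n * x₂) ^ 2 := fun _ => by ring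
  simp_rw [hsplit]
  rw [integral_add (Continuous.intervalIntegrable (by fun_prop) _ _)
    (Continuous.intervalIntegrable (by fun_prop) _ _), integral_const_mul, integral_const_mul,
    integral_sin_mul_sq, integral_cos_mul_sq,
    integral_cos_two_mul_nat_mul_zero_pi hn]
  field_simp
  ring

open Real in
theorem stmt_14_general (ℓ δ : ℝ) (hδ : 0 < δ) :
    ∃ c > (0 : ℝ), ∀ n : ℕ+ × ℕ+,
      c * δ * ((n.1 : ℝ) ^ 2 + (n.2 : ℝ) ^ 2) ≤
        ∫ x₁ in ℓ..(ℓ + δ), ∫ x₂ in (0 : ℝ)..π,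
          ((2 / π) * (n.1 : ℝ) * Real.cos ((n.1 : ℝ) * x₁) * Real.sin ((n.2 : ℝ) * x₂)) ^ 2 +
            ((2 / π) * (n.2 : ℝ) * Real.sin ((n.1 : ℝ) * x₁) * Real.cos ((n.2 : ℝ) * x₂)) ^ 2 := by
  obtain ⟨K, hK, hKle⟩ := exists_pos_le_integral_cos_mul_sq_and_sin_mul_sq hδ
  refine ⟨2 * K / (π * δ), by positivity, fun ⟨n₁, n₂⟩ => ?_⟩
  obtain ⟨hcos, hsin⟩ := hKle ℓ n₁ (by exact_mod_cast n₁.pos)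
  simp_rw [integral_zero_pi_gradient_sq_sin_mul_sin _ n₂.ne_zero]
  rw [integral_const_mul, integral_add (Continuous.intervalIntegrable (by fun_prop) _ _)
    (Continuous.intervalIntegrable (by fun_prop) _ _), integral_const_mul, integral_const_mul]
  calc 2 * K / (π * δ) * δ * ((n₁ : ℝ) ^ 2 + (n₂ : ℝ) ^ 2)
      = 2 / π * ((n₁ : ℝ) ^ 2 * K + (n₂ : ℝ) ^ 2 * K) := by field_simp
    _ ≤ _ := by gcongr

open Real in
theorem stmt_14 (ℓ δ : ℝ) (h0 : 0 ≤ ℓ) (hδ : 0 < δ) (hπ : ℓ + δ ≤ π) :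
    ∃ c > (0 : ℝ), ∀ n : ℕ+ × ℕ+,
      c * δ * ((n.1 : ℝ) ^ 2 + (n.2 : ℝ) ^ 2) ≤
        ∫ x₁ in ℓ..(ℓ + δ), ∫ x₂ in (0 : ℝ)..π,
          ((2 / π) * (n.1 : ℝ) * Real.cos ((n.1 : ℝ) * x₁) * Real.sin ((n.2 : ℝ) * x₂)) ^ 2 +
            ((2 / π) * (n.2 : ℝ) * Real.sin ((n.1 : ℝ) * x₁) * Real.cos ((n.2 : ℝ) * x₂)) ^ 2 :=
  stmt_14_general ℓ δ hδ
end
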